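/- Fix c > 0. There exist a constant C₀ > 0 and N₀ such that for every even integer N ≥ N₀ and every vertex v ∈ V_N, the sum Σ_{u ∈ V_N} p(v,u) satisfies |Σ_{u ∈ V_N} p(v,u) − (4c·log 2 − 2c/N − 2c/N²)| ≤ C₀/N⁴. -/

import Mathlib

open scoped BigOperators

/-- Vertices of the discrete 2-dimensional torus. -/
abbrev Vtx (N : ℕ) : Type := ZMod N × ZMod N

/-- `ρ_N(i)`: for a residue represented in `{0,…,N−1}`, `ρ_N(i) = i` if `i ≤ N/2`
and `ρ_N(i) = N − i` otherwise. -/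
def rhoN (N : ℕ) (i : ZMod N) : ℕ :=
  if 2 * i.val ≤ N then i.val else N - i.val

/-- Torus distance `ρ(u,v) = ρ_N(u₁ − v₁) + ρ_N(u₂ − v₂)`. -/
def torusDist (N : ℕ) (u v : Vtx N) : ℕ :=
  rhoN N (u.1 - v.1) + rhoN N (u.2 - v.2)

/-- Connection probability `p(u,v) = min(c/(N·ρ(u,v)), 1)` for `u ≠ v`, `p(u,u) = 0`. -/
noncomputable def edgeProb (N : ℕ) (c : ℝ) (u v : Vtx N) : ℝ :=
  if u = v then 0 else min (c / ((N : ℝ) * (torusDist N u v : ℝ))) 1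

/-! For `N ≥ c` no probability is truncated, so after translating `v` to the origin the sum is
`(c/N) Σ_{x,y} 1/(ρ_N(x) + ρ_N(y))`. For `N = 2m`, `ρ_N` takes the values `1, …, m-1` twice and
`0`, `m` once, which turns the double sum into harmonic numbers: it equals
`8m(H_{2m} − H_m) − 3/(2m)`. The error is then `−4c·R(m)` with
`R(m) = log 2 − (H_{2m} − H_m) − 1/(4m) + 1/(16m²)`. Since `R(m) → 0` and the increments
`R(m) − R(m+1) = 1/(16m²(m+1)²(2m+1))` are dominated by those of `1/(32m⁴)`, telescoping gives
`|R(m)| ≤ 1/(32m⁴)`. -/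

open Finset Filter Topology

lemma sum_zmod_val {M : Type*} [AddCommMonoid M] {N : ℕ} [NeZero N] (f : ℕ → M) :
    ∑ x : ZMod N, f x.val = ∑ i ∈ range N, f i := by
  obtain ⟨n, rfl⟩ : ∃ n, N = n + 1 := Nat.exists_eq_succ_of_ne_zero (NeZero.ne N)
  exact Fin.sum_univ_eq_sum_range f (n + 1)

lemma sum_rhoN_of_eq_two_mul {M : Type*} [AddCommGroup M] {N m : ℕ} [NeZero N]
    (hN : N = 2 * m) (F : ℕ → M) :
    ∑ x : ZMod N, F (rhoN N x) = 2 • ∑ i ∈ range (m + 1), F i - F 0 - F m := by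
  have hm : 0 < m := by have := NeZero.ne N; omega
  calc ∑ x : ZMod N, F (rhoN N x)
      = ∑ i ∈ range N, F (if 2 * i ≤ N then i else N - i) :=
        sum_zmod_val (fun i => F (if 2 * i ≤ N then i else N - i))
    _ = ∑ i ∈ range (m + 1), F i + ∑ i ∈ Ico (m + 1) (2 * m), F (2 * m - i) := by
        subst hN
        rw [← sum_range_add_sum_Ico _ (by omega : m + 1 ≤ 2 * m)]
        congr 1
        · refine sum_congr rfl fun i hi => ?_
          rw [if_pos (by simp at hi; omega)]
        · refine sum_congr rfl fun i hi => ?_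
          rw [if_neg (by simp at hi; omega)]
    _ = ∑ i ∈ range (m + 1), F i + ∑ i ∈ Ico 1 m, F i := by
        rw [sum_Ico_reflect F _ (by omega : 2 * m ≤ 2 * m + 1),
          show 2 * m + 1 - 2 * m = 1 by omega, show 2 * m + 1 - (m + 1) = m by omega]
    _ = 2 • ∑ i ∈ range (m + 1), F i - F 0 - F m := by
        rw [sum_range_succ, range_eq_Ico, sum_eq_sum_Ico_succ_bot hm, two_nsmul]
        abel

lemma sum_range_succ_inv_add (k n : ℕ) :
    ∑ i ∈ range (n + 1), ((i + k : ℕ) : ℝ)⁻¹ = (k : ℝ)⁻¹ + harmonic (k + n) - harmonic k := by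
  induction n with
  | zero => simp
  | succ n ih =>
    rw [sum_range_succ, ih, ← add_assoc, harmonic_succ]
    push_cast
    ring

lemma sum_range_succ_sum_inv_add (m : ℕ) :
    ∑ a ∈ range (m + 1), ∑ b ∈ range (m + 1), ((a + b : ℕ) : ℝ)⁻¹ =
      (2 * m + 1) * harmonic (2 * m) - 2 * m * harmonic m := by
  induction m with
  | zero => simp
  | succ m ih =>
    rw [sum_range_succ, sum_congr rfl fun a _ => sum_range_succ _ (m + 1), sum_add_distrib, ih,
      sum_congr rfl fun b _ => congrArg (fun n : ℕ => (n : ℝ)⁻¹) (add_comm (m + 1) b),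
      sum_range_succ_inv_add, sum_range_succ_inv_add, show m + 1 + m = 2 * m + 1 by ring,
      show m + 1 + (m + 1) = 2 * m + 1 + 1 by ring, show 2 * (m + 1) = 2 * m + 1 + 1 by ring]
    simp only [harmonic_succ]
    push_cast
    field_simp
    ring

lemma sum_inv_rhoN_add_rhoN {N m : ℕ} [NeZero N] (hN : N = 2 * m) :
    ∑ x : ZMod N, ∑ y : ZMod N, ((rhoN N x + rhoN N y : ℕ) : ℝ)⁻¹ =
      8 * m * (harmonic (2 * m) - harmonic m) - 3 / (2 * m) := by
  have hm : (m : ℝ) ≠ 0 := by have := NeZero.ne N; norm_cast; omega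
  have fold (k : ℕ) : ∑ x : ZMod N, ((rhoN N x + k : ℕ) : ℝ)⁻¹ =
      2 • ∑ a ∈ range (m + 1), ((a + k : ℕ) : ℝ)⁻¹ - (k : ℝ)⁻¹ - ((m + k : ℕ) : ℝ)⁻¹ := by
    rw [sum_rhoN_of_eq_two_mul hN (fun a => ((a + k : ℕ) : ℝ)⁻¹), zero_add]
  calc ∑ x : ZMod N, ∑ y : ZMod N, ((rhoN N x + rhoN N y : ℕ) : ℝ)⁻¹
      = ∑ x : ZMod N, (2 • ∑ b ∈ range (m + 1), ((rhoN N x + b : ℕ) : ℝ)⁻¹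
          - ((rhoN N x + 0 : ℕ) : ℝ)⁻¹ - ((rhoN N x + m : ℕ) : ℝ)⁻¹) :=
        sum_congr rfl fun x _ =>
          sum_rhoN_of_eq_two_mul hN (fun b => ((rhoN N x + b : ℕ) : ℝ)⁻¹)
    _ = 2 • ∑ b ∈ range (m + 1), ∑ x : ZMod N, ((rhoN N x + b : ℕ) : ℝ)⁻¹
          - ∑ x : ZMod N, ((rhoN N x + 0 : ℕ) : ℝ)⁻¹
          - ∑ x : ZMod N, ((rhoN N x + m : ℕ) : ℝ)⁻¹ := by
        rw [sum_sub_distrib, sum_sub_distrib, ← smul_sum, sum_comm]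
    _ = _ := by
        have sum_inv : ∑ a ∈ range (m + 1), ((a : ℕ) : ℝ)⁻¹ = harmonic m := by
          simpa using sum_range_succ_inv_add 0 m
        have sum_inv_add : ∑ a ∈ range (m + 1), ((a + m : ℕ) : ℝ)⁻¹ =
            (m : ℝ)⁻¹ + harmonic (2 * m) - harmonic m := by
          rw [sum_range_succ_inv_add, two_mul]
        have sum_add_inv : ∑ a ∈ range (m + 1), ((m + a : ℕ) : ℝ)⁻¹ =
            (m : ℝ)⁻¹ + harmonic (2 * m) - harmonic m :=
          (sum_congr rfl fun a _ => by rw [Nat.add_comm]).trans sum_inv_add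
        simp only [fold, sum_sub_distrib, ← smul_sum]
        simp only [add_zero]
        rw [sum_comm, sum_range_succ_sum_inv_add, sum_inv, sum_inv_add, sum_add_inv,
          ← two_mul]
        simp only [nsmul_eq_mul]
        push_cast
        field_simp
        ring

section EdgeProb

variable {N : ℕ} [NeZero N]

lemma rhoN_eq_zero_iff {x : ZMod N} : rhoN N x = 0 ↔ x = 0 := by
  have := x.val_lt
  rw [← ZMod.val_eq_zero]
  unfold rhoN
  split_ifs <;> omega

lemma torusDist_eq_zero_iff {u v : Vtx N} : torusDist N u v = 0 ↔ u = v := by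
  simp [torusDist, rhoN_eq_zero_iff, sub_eq_zero, Prod.ext_iff]

lemma edgeProb_eq_div {c : ℝ} (hcN : c ≤ N) (u v : Vtx N) :
    edgeProb N c u v = c / (N * torusDist N u v) := by
  unfold edgeProb
  split_ifs with h
  -- the diagonal is covered by `c / (N * 0) = 0`
  · simp [torusDist_eq_zero_iff.2 h]
  · have hd : (1 : ℝ) ≤ torusDist N u v := by
      exact_mod_cast Nat.one_le_iff_ne_zero.2 (torusDist_eq_zero_iff.not.2 h)
    exact min_eq_left (div_le_one_of_le₀ (hcN.trans (le_mul_of_one_le_right (by positivity) hd))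
      (by positivity))

lemma sum_edgeProb {c : ℝ} (hcN : c ≤ N) (v : Vtx N) :
    ∑ u : Vtx N, edgeProb N c v u =
      c / N * ∑ x : ZMod N, ∑ y : ZMod N, ((rhoN N x + rhoN N y : ℕ) : ℝ)⁻¹ := by
  simp only [mul_sum]
  rw [← Fintype.sum_prod_type']
  refine Fintype.sum_equiv (Equiv.subLeft v) _ _ fun u => ?_
  rw [edgeProb_eq_div hcN, Equiv.subLeft_apply, torusDist, div_mul_eq_div_div, div_eq_mul_inv]
  simp only [Prod.fst_sub, Prod.snd_sub]

end EdgeProb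

lemma abs_le_of_tendsto_of_abs_sub_succ_le {u φ : ℕ → ℝ} {m : ℕ}
    (hu : Tendsto u atTop (𝓝 0)) (hφ : Tendsto φ atTop (𝓝 0))
    (h : ∀ n ≥ m, |u n - u (n + 1)| ≤ φ n - φ (n + 1)) : |u m| ≤ φ m := by
  have telescope : ∀ n ≥ m, |u m - u n| ≤ φ m - φ n := by
    intro n hn
    induction n, hn using Nat.le_induction with
    | base => simp
    | succ n hmn ih =>
      linarith [abs_sub_le (u m) (u n) (u (n + 1)), h n hmn]
  simpa using le_of_tendsto_of_tendsto ((tendsto_const_nhds.sub hu).abs)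
    (tendsto_const_nhds.sub hφ) ((eventually_ge_atTop m).mono telescope)

lemma tendsto_harmonic_two_mul_sub_harmonic :
    Tendsto (fun m : ℕ => (harmonic (2 * m) : ℝ) - harmonic m) atTop (𝓝 (Real.log 2)) := by
  have h2 : Tendsto (fun m : ℕ => 2 * m) atTop atTop :=
    tendsto_id.const_mul_atTop' two_pos
  have := ((Real.tendsto_harmonic_sub_log.comp h2).sub Real.tendsto_harmonic_sub_log).add_const
    (Real.log 2)
  rw [sub_self, zero_add] at this
  refine this.congr' ((eventually_ne_atTop 0).mono fun m hm => ?_)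
  simp only [Function.comp_apply, Nat.cast_mul, Nat.cast_ofNat]
  rw [Real.log_mul two_ne_zero (Nat.cast_ne_zero.2 hm)]
  ring

noncomputable def logTwoRemainder (m : ℕ) : ℝ :=
  Real.log 2 - (harmonic (2 * m) - harmonic m) - 1 / (4 * m) + 1 / (16 * m ^ 2)

lemma tendsto_logTwoRemainder : Tendsto logTwoRemainder atTop (𝓝 0) := by
  have hinv := tendsto_inv_atTop_nhds_zero_nat (𝕜 := ℝ)
  have := (((tendsto_const_nhds (x := Real.log 2)).sub tendsto_harmonic_two_mul_sub_harmonic).sub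
    (hinv.const_mul (1 / 4))).add ((hinv.pow 2).const_mul (1 / 16))
  simp only [sub_self, mul_zero, add_zero, ne_eq, OfNat.ofNat_ne_zero, not_false_eq_true,
    zero_pow] at this
  refine this.congr fun m => ?_
  simp only [logTwoRemainder, one_div, mul_inv, inv_pow]

lemma logTwoRemainder_sub_succ {m : ℕ} (hm : m ≠ 0) :
    logTwoRemainder m - logTwoRemainder (m + 1) = 1 / (16 * m ^ 2 * (m + 1) ^ 2 * (2 * m + 1)) := by
  have hm' : (m : ℝ) ≠ 0 := Nat.cast_ne_zero.2 hm
  simp only [logTwoRemainder, show 2 * (m + 1) = 2 * m + 1 + 1 by ring, harmonic_succ]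
  push_cast
  field_simp
  ring

lemma abs_logTwoRemainder_le {m : ℕ} (hm : m ≠ 0) : |logTwoRemainder m| ≤ 1 / (32 * m ^ 4) := by
  refine abs_le_of_tendsto_of_abs_sub_succ_le (φ := fun n : ℕ => 1 / (32 * (n : ℝ) ^ 4))
    tendsto_logTwoRemainder ?_ fun n hn => ?_
  · have := (tendsto_inv_atTop_nhds_zero_nat (𝕜 := ℝ)).pow 4 |>.const_mul (1 / 32)
    simp only [ne_eq, OfNat.ofNat_ne_zero, not_false_eq_true, zero_pow, mul_zero] at this
    refine this.congr fun n => ?_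
    simp only [inv_pow, one_div, mul_inv]
  · have hn' : (0 : ℝ) < n := by exact_mod_cast (Nat.pos_of_ne_zero hm).trans_le hn
    rw [logTwoRemainder_sub_succ (by omega), abs_of_pos (by positivity)]
    have key : 1 / (32 * (n : ℝ) ^ 4) - 1 / (32 * ((n + 1 : ℕ) : ℝ) ^ 4) -
          1 / (16 * n ^ 2 * (n + 1) ^ 2 * (2 * n + 1)) =
        (6 * n ^ 4 + 12 * n ^ 3 + 12 * n ^ 2 + 6 * n + 1) /
          (32 * n ^ 4 * (n + 1) ^ 4 * (2 * n + 1)) := by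
      push_cast
      field_simp
      ring
    have : 0 ≤ (6 * (n : ℝ) ^ 4 + 12 * n ^ 3 + 12 * n ^ 2 + 6 * n + 1) /
        (32 * n ^ 4 * (n + 1) ^ 4 * (2 * n + 1)) := by positivity
    linarith

/-- For `c > 0` there are `C₀ > 0` and `N₀` such that for every even `N ≥ N₀` and every
vertex `v`, `|Σ_{u} p(v,u) − (4c·log 2 − 2c/N − 2c/N²)| ≤ C₀/N⁴`. -/
theorem stmt3 (c : ℝ) (hc : 0 < c) :
    ∃ C₀ : ℝ, 0 < C₀ ∧ ∃ N₀ : ℕ, ∀ (N : ℕ) [NeZero N], N₀ ≤ N → Even N →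
      ∀ v : Vtx N,
        |(∑ u : Vtx N, edgeProb N c v u) -
            (4 * c * Real.log 2 - 2 * c / (N : ℝ) - 2 * c / (N : ℝ) ^ 2)| ≤
          C₀ / (N : ℝ) ^ 4 := by
  refine ⟨2 * c, by positivity, ⌈c⌉₊, fun N _ hN₀ ⟨m, hm⟩ v => ?_⟩
  have hN : N = 2 * m := by omega
  have hm0 : m ≠ 0 := by have := NeZero.ne N; omega
  have hcN : c ≤ N := (Nat.le_ceil c).trans (by exact_mod_cast hN₀)
  have hm' : (m : ℝ) ≠ 0 := Nat.cast_ne_zero.2 hm0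
  rw [sum_edgeProb hcN, sum_inv_rhoN_add_rhoN hN, hN]
  calc _ = |-(4 * c) * logTwoRemainder m| := by
        congr 1
        rw [logTwoRemainder]
        push_cast
        field_simp
        ring
    _ ≤ 4 * c * (1 / (32 * m ^ 4)) := by
        rw [abs_mul, abs_neg, abs_of_pos (by positivity)]
        gcongr
        exact abs_logTwoRemainder_le hm0
    _ = 2 * c / ((2 * m : ℕ) : ℝ) ^ 4 := by
        push_cast
        field_simp
        ring
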